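/- Let f : ℝ^{m×n} → ℝ be differentiable, let w be a real m×n matrix with all rows nonzero, let v be any real m×n matrix, and set G := P^{r⊥}_w(∇f(w)), e := v − ∇f(w), and d := RN(P^{r⊥}_w(v)). Then ⟨∇f(w), d⟩ ≥ ‖G‖_{1,2} − 2‖e‖_{1,2}. -/

import Mathlib

open scoped BigOperators RealInnerProductSpace
open Finset MeasureTheory

noncomputable section

/-- The space of real m×n matrices with the Frobenius (Euclidean) norm and inner product. -/
abbrev Mat (m n : ℕ) := EuclideanSpace ℝ (Fin m × Fin n)

/-- The i-th row of a matrix. -/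
def row {m n : ℕ} (x : Mat m n) (i : Fin m) : Fin n → ℝ := fun j => x (i, j)

/-- Euclidean inner product of two rows. -/
def rdot {n : ℕ} (x y : Fin n → ℝ) : ℝ := ∑ j, x j * y j

/-- Euclidean norm of a row. -/
def rnorm {n : ℕ} (x : Fin n → ℝ) : ℝ := Real.sqrt (rdot x x)

/-- Row-wise perpendicular projection: each row of `x` is projected onto the
orthogonal complement of the corresponding row of `w`. -/
def Pperp {m n : ℕ} (w x : Mat m n) : Mat m n :=
  WithLp.toLp 2 (fun p => x p - (rdot (row x p.1) (row w p.1) / (rnorm (row w p.1)) ^ 2) * w p)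

/-- Row-wise normalization, with the convention 0/0 = 0. -/
def RN {m n : ℕ} (x : Mat m n) : Mat m n :=
  WithLp.toLp 2 (fun p => if row x p.1 = 0 then 0 else x p / rnorm (row x p.1))

/-- The (1,2)-norm: sum of Euclidean norms of the rows. -/
def norm12 {m n : ℕ} (x : Mat m n) : ℝ := ∑ i, rnorm (row x i)

/-- The (∞,2)-norm: maximum of Euclidean norms of the rows. -/
def normInf2 {m n : ℕ} (x : Mat m n) : ℝ := ⨆ i, rnorm (row x i)

/-!
Row by row, the claim is about the orthogonal projection `P` onto `(ℝ ∙ wᵢ)ᗮ`, with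
`g = ∇f(w)ᵢ` and `d = ‖P v‖⁻¹ • P v`. As `d` lies in the range of the self-adjoint `P`,
`⟪g, d⟫ = ⟪P g, d⟫ = ‖P v‖ - ⟪P (v - g), d⟫ ≥ ‖P v‖ - ‖v - g‖`, and the triangle inequality
`‖P g‖ ≤ ‖P v‖ + ‖v - g‖` costs the second error term. Summing over the rows gives the bound.
-/

namespace NormedSpace

theorem norm_normalize_le_one {V : Type*} [NormedAddCommGroup V] [NormedSpace ℝ V] (x : V) :
    ‖normalize x‖ ≤ 1 := by
  by_cases hx : x = 0
  · simp [hx]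
  · exact (norm_normalize_eq_one_iff.mpr hx).le

variable {E : Type*} [NormedAddCommGroup E] [InnerProductSpace ℝ E]

theorem real_inner_normalize_self (x : E) : ⟪x, normalize x⟫ = ‖x‖ := by
  by_cases hx : x = 0
  · simp [hx]
  · rw [normalize, real_inner_smul_right, real_inner_self_eq_norm_sq]
    field_simp

theorem real_inner_normalize_le_norm (x y : E) : ⟪x, normalize y⟫ ≤ ‖x‖ :=
  (real_inner_le_norm _ _).trans (mul_le_of_le_one_right (norm_nonneg x) (norm_normalize_le_one y))

end NormedSpace

open NormedSpace in
theorem Submodule.norm_starProjection_sub_le_inner_normalize {E : Type*} [NormedAddCommGroup E]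
    [InnerProductSpace ℝ E] (K : Submodule ℝ E) [K.HasOrthogonalProjection] (g v : E) :
    ‖K.starProjection g‖ - 2 * ‖v - g‖ ≤ ⟪g, normalize (K.starProjection v)⟫ := by
  set P := K.starProjection
  set d := normalize (P v)
  have hd_mem : d ∈ K := K.smul_mem _ (K.starProjection_apply_mem v)
  have hgd : ⟪g, d⟫ = ⟪P v, d⟫ - ⟪P (v - g), d⟫ := by
    rw [← inner_sub_left, ← map_sub, sub_sub_cancel, K.inner_starProjection_left_eq_right,
      K.starProjection_eq_self_iff.mpr hd_mem]
  have hPe : ‖P (v - g)‖ ≤ ‖v - g‖ := K.norm_starProjection_apply_le _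
  have hPg : ‖P g‖ ≤ ‖P v‖ + ‖P (v - g)‖ := by
    simpa only [map_sub, sub_sub_cancel] using norm_sub_le (P v) (P (v - g))
  have hPe_d : ⟪P (v - g), d⟫ ≤ ‖P (v - g)‖ := real_inner_normalize_le_norm _ _
  rw [hgd, real_inner_normalize_self]
  linarith

section Rows

variable {m n : ℕ}

def rowVec (x : Mat m n) (i : Fin m) : EuclideanSpace ℝ (Fin n) := WithLp.toLp 2 (row x i)

theorem rdot_eq_inner (x y : Fin n → ℝ) : rdot x y = ⟪WithLp.toLp 2 x, WithLp.toLp 2 y⟫ := by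
  simp [rdot, PiLp.inner_apply, mul_comm]

theorem rnorm_eq_norm (x : Fin n → ℝ) : rnorm x = ‖WithLp.toLp 2 x‖ := by
  rw [rnorm, rdot_eq_inner, real_inner_self_eq_norm_sq, Real.sqrt_sq (norm_nonneg _)]

theorem inner_eq_sum_inner_rowVec (x y : Mat m n) : ⟪x, y⟫ = ∑ i, ⟪rowVec x i, rowVec y i⟫ := by
  simp [PiLp.inner_apply, rowVec, row, Fintype.sum_prod_type]

theorem norm12_eq_sum_norm_rowVec (x : Mat m n) : norm12 x = ∑ i, ‖rowVec x i‖ := by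
  simp [norm12, rnorm_eq_norm, rowVec]

theorem rowVec_sub (x y : Mat m n) (i : Fin m) : rowVec (x - y) i = rowVec x i - rowVec y i := rfl

theorem rowVec_Pperp (w x : Mat m n) (i : Fin m) :
    rowVec (Pperp w x) i = (ℝ ∙ rowVec w i)ᗮ.starProjection (rowVec x i) := by
  rw [Submodule.starProjection_orthogonal_val, Submodule.starProjection_singleton]
  ext j
  simp [rowVec, row, Pperp, rdot_eq_inner, rnorm_eq_norm, real_inner_comm]

theorem rowVec_RN (x : Mat m n) (i : Fin m) :
    rowVec (RN x) i = NormedSpace.normalize (rowVec x i) := by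
  ext j
  by_cases h : row x i = 0 <;>
    simp [rowVec, row, RN, NormedSpace.normalize, h, rnorm_eq_norm, div_eq_inv_mul]

end Rows

theorem projected_inner_lower_bound_one_two_general {m n : ℕ}
    (gradf : Mat m n → Mat m n)
    (w : Mat m n) (v : Mat m n) :
    ⟪gradf w, RN (Pperp w v)⟫ ≥
      norm12 (Pperp w (gradf w)) - 2 * norm12 (v - gradf w) := by
  rw [ge_iff_le, norm12_eq_sum_norm_rowVec, norm12_eq_sum_norm_rowVec, inner_eq_sum_inner_rowVec,
    mul_sum, ← sum_sub_distrib]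
  refine sum_le_sum fun i _ => ?_
  rw [rowVec_RN, rowVec_Pperp, rowVec_Pperp, rowVec_sub]
  exact Submodule.norm_starProjection_sub_le_inner_normalize _ _ _

/-- Projected inner-product lower bound in the (1,2)-norm. -/
theorem projected_inner_lower_bound_one_two {m n : ℕ} (f : Mat m n → ℝ)
    (gradf : Mat m n → Mat m n) (hdiff : ∀ u, HasGradientAt f (gradf u) u)
    (w : Mat m n) (hw : ∀ i, row w i ≠ 0) (v : Mat m n) :
    ⟪gradf w, RN (Pperp w v)⟫ ≥
      norm12 (Pperp w (gradf w)) - 2 * norm12 (v - gradf w) :=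
  projected_inner_lower_bound_one_two_general gradf w v
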